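/- arXiv:2101.01972 — 3 statements merged into one kernel-verified Lean document; each statement's English description precedes it below -/
import Mathlib

section
/- Let (Λ, Σ, μ) be a probability space and A ⊆ Λ a subset satisfying: for all Δ ∈ Σ, A ∩ Δ = ∅ implies μ(Δ) = 0, and also for all Δ ∈ Σ, Aᶜ ∩ Δ = ∅ implies μ(Δ) = 0. Then there exist two extensions μ⁺ and μ⁻ of μ to the σ-algebra generated by Σ and A such that μ⁺(A) = 1 and μ⁻(A) = 0. -/
/-!
Take `μ⁺ s := μ* (s ∩ A)` and `μ⁻ s := μ* (s ∩ Aᶜ)`, with `μ*` the outer measure of `μ`.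
Restricting an outer measure to any set `B` keeps its Carathéodory sets and makes `B` one of
them, so both are measures on `σ(Σ, A)`. On `Δ ∈ Σ` they agree with `μ`, because `A` and `Aᶜ`
meet every non-null measurable set; and `μ⁺ Aᶜ = μ⁻ A = μ* ∅ = 0`.
-/

open MeasureTheory MeasurableSpace

namespace MeasureTheory.OuterMeasure

variable {α : Type*} (ν : OuterMeasure α) (s : Set α)

theorem isCaratheodory_restrict_self : (restrict s ν).IsCaratheodory s := by
  intro t
  simp [restrict_apply, Set.inter_assoc]

theorem IsCaratheodory.restrict {t : Set α} (ht : ν.IsCaratheodory t) :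
    (restrict s ν).IsCaratheodory t := by
  intro u
  simp only [restrict_apply, Set.inter_right_comm u t s, ← Set.inter_sdiff_right_comm]
  exact ht (u ∩ s)

theorem caratheodory_sup_generateFrom_le_caratheodory_restrict :
    ν.caratheodory ⊔ generateFrom {s} ≤ (restrict s ν).caratheodory :=
  sup_le (fun _ ht => ht.restrict ν s)
    (generateFrom_le fun _ ht => ht ▸ isCaratheodory_restrict_self ν s)

end MeasureTheory.OuterMeasure

theorem MeasurableSpace.generateFrom_singleton_compl {α : Type*} (s : Set α) :
    generateFrom {sᶜ} = generateFrom {s} :=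
  le_antisymm
    (generateFrom_le fun _ ht => Set.mem_singleton_iff.1 ht ▸
      (measurableSet_generateFrom (Set.mem_singleton s)).compl)
    (generateFrom_le fun _ ht => Set.mem_singleton_iff.1 ht ▸
      (measurableSet_generateFrom (Set.mem_singleton sᶜ)).of_compl)

namespace MeasureTheory.Measure

variable {α : Type*} {m : MeasurableSpace α} (μ : Measure α) {B : Set α}

theorem measure_inter_eq_of_forall_inter_eq_empty
    (hB : ∀ Δ : Set α, MeasurableSet Δ → B ∩ Δ = ∅ → μ Δ = 0)
    {Δ : Set α} (hΔ : MeasurableSet Δ) : μ (Δ ∩ B) = μ Δ := by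
  refine le_antisymm (measure_mono Set.inter_subset_left) ?_
  obtain ⟨D, hΔBD, hD, hμD⟩ := exists_measurable_superset μ (Δ ∩ B)
  have hnull : μ (Δ \ D) = 0 :=
    hB _ (hΔ.diff hD) <| Set.eq_empty_of_forall_notMem fun x ⟨hxB, hxΔ, hxD⟩ =>
      hxD (hΔBD ⟨hxΔ, hxB⟩)
  calc μ Δ ≤ μ (Δ ∩ D) + μ (Δ \ D) := measure_le_inter_add_sdiff μ Δ D
    _ = μ (Δ ∩ D) := by rw [hnull, add_zero]
    _ ≤ μ D := measure_mono Set.inter_subset_right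
    _ = μ (Δ ∩ B) := hμD

theorem exists_extension_measure_compl_eq_zero
    (hB : ∀ Δ : Set α, MeasurableSet Δ → B ∩ Δ = ∅ → μ Δ = 0) :
    ∃ ν : @Measure α (m ⊔ generateFrom {B}),
      (∀ Δ : Set α, MeasurableSet[m] Δ → ν Δ = μ Δ) ∧ ν Bᶜ = 0 := by
  have hle : m ⊔ generateFrom {B} ≤ (OuterMeasure.restrict B μ.toOuterMeasure).caratheodory :=
    (sup_le_sup_right (le_toOuterMeasure_caratheodory μ) _).trans
      (μ.toOuterMeasure.caratheodory_sup_generateFrom_le_caratheodory_restrict B)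
  let ν := @OuterMeasure.toMeasure α (m ⊔ generateFrom {B}) _ hle
  have hν : ∀ s, MeasurableSet[m ⊔ generateFrom {B}] s → ν s = μ (s ∩ B) := fun s hs =>
    (@toMeasure_apply α (m ⊔ generateFrom {B}) _ hle s hs).trans
      (OuterMeasure.restrict_apply _ _ _)
  refine ⟨ν, fun Δ hΔ => ?_, ?_⟩
  · rw [hν Δ (le_sup_left (b := generateFrom {B}) Δ hΔ),
      measure_inter_eq_of_forall_inter_eq_empty μ hB hΔ]
  · have hBm : MeasurableSet[m ⊔ generateFrom {B}] B :=
      le_sup_right (a := m) B (measurableSet_generateFrom rfl)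
    rw [hν _ hBm.compl, Set.compl_inter_self, measure_empty]

end MeasureTheory.Measure

theorem stmt_2 {Λ : Type*} [m : MeasurableSpace Λ] (μ : Measure Λ)
    [IsProbabilityMeasure μ] (A : Set Λ)
    (hA : ∀ Δ : Set Λ, MeasurableSet Δ → A ∩ Δ = ∅ → μ Δ = 0)
    (hAc : ∀ Δ : Set Λ, MeasurableSet Δ → Aᶜ ∩ Δ = ∅ → μ Δ = 0) :
    ∃ μp μm : @Measure Λ (m ⊔ MeasurableSpace.generateFrom {A}),
      @IsProbabilityMeasure Λ (m ⊔ MeasurableSpace.generateFrom {A}) μp ∧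
      @IsProbabilityMeasure Λ (m ⊔ MeasurableSpace.generateFrom {A}) μm ∧
      (∀ Δ : Set Λ, MeasurableSet[m] Δ → μp Δ = μ Δ) ∧
      (∀ Δ : Set Λ, MeasurableSet[m] Δ → μm Δ = μ Δ) ∧
      μp A = 1 ∧ μm A = 0 := by
  obtain ⟨μp, hμp, hμpAc⟩ := μ.exists_extension_measure_compl_eq_zero hA
  have hm := μ.exists_extension_measure_compl_eq_zero hAc
  rw [MeasurableSpace.generateFrom_singleton_compl, compl_compl] at hm
  obtain ⟨μm, hμm, hμmA⟩ := hm
  have hAm : MeasurableSet[m ⊔ MeasurableSpace.generateFrom {A}] A :=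
    le_sup_right (a := m) A (MeasurableSpace.measurableSet_generateFrom rfl)
  have hp : @IsProbabilityMeasure Λ (m ⊔ MeasurableSpace.generateFrom {A}) μp :=
    ⟨by rw [hμp _ MeasurableSet.univ, measure_univ]⟩
  refine ⟨μp, μm, hp, ⟨by rw [hμm _ MeasurableSet.univ, measure_univ]⟩, hμp, hμm, ?_, hμmA⟩
  exact (@prob_compl_eq_zero_iff Λ (m ⊔ MeasurableSpace.generateFrom {A}) μp A hp hAm).1 hμpAc
end

section
/- Let X be a set with the cardinality of the continuum (i.e., |X| = 2^ℵ₀). Assuming the axiom of choice, the continuum hypothesis is equivalent to the existence of a map x ↦ Δ_x assigning to each x ∈ X a countable subset Δ_x ⊆ X such that for all x₁, x₂ ∈ X, either x₁ ∈ Δ_{x₂} or x₂ ∈ Δ_{x₁}. -/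
open Cardinal Set

/-! Since `ℵ₁ ≤ 𝔠 = #X`, CH says exactly `#X ≤ ℵ₁`. If so, order `X` by an injection into
the initial ordinal `ω₁`: every point has countably many predecessors, and any two points are
comparable. Conversely, if `ℵ₁ < #X`, pick `A ⊆ X` of size `ℵ₁`; the sets `Δ a` with `a ∈ A`
cover at most `ℵ₁` points, so some `z` lies in none of them, and then `A ⊆ Δ z` is countable. -/

universe u

lemma countable_Iic_ord_aleph_one_toType (i : (ℵ₁ : Cardinal.{u}).ord.ToType) :
    (Iic i).Countable := by
  rw [← Iio_insert, countable_insert, ← le_aleph0_iff_set_countable, ← lt_aleph_one_iff]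
  simpa using mk_Iio_lt i (by simp)

lemma exists_countable_comparable_of_mk_le_aleph_one {X : Type u} (hX : #X ≤ ℵ₁) :
    ∃ Δ : X → Set X, (∀ x, (Δ x).Countable) ∧ ∀ x₁ x₂ : X, x₁ ∈ Δ x₂ ∨ x₂ ∈ Δ x₁ := by
  rw [← mk_ord_toType ℵ₁, le_def] at hX
  obtain ⟨f⟩ := hX
  exact ⟨fun x => f ⁻¹' Iic (f x),
    fun x => (countable_Iic_ord_aleph_one_toType (f x)).preimage f.injective,
    fun x₁ x₂ => le_total (f x₁) (f x₂)⟩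

lemma subset_of_notMem_biUnion {X : Type*} {Δ : X → Set X}
    (hΔ : ∀ x₁ x₂ : X, x₁ ∈ Δ x₂ ∨ x₂ ∈ Δ x₁) {A : Set X} {z : X} (hz : z ∉ ⋃ a ∈ A, Δ a) :
    A ⊆ Δ z := fun a ha =>
  (hΔ a z).resolve_right fun h => hz (mem_biUnion ha h)

lemma mk_biUnion_le_of_countable {X : Type u} {Δ : X → Set X} (hΔ : ∀ x, (Δ x).Countable)
    (A : Set X) : #(⋃ a ∈ A, Δ a) ≤ #A * ℵ₀ :=
  (mk_biUnion_le Δ A).trans <| mul_le_mul_right (ciSup_le' fun a : A => (hΔ a).le_aleph0) _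

lemma mk_le_aleph_one_of_countable_comparable {X : Type u} {Δ : X → Set X}
    (hc : ∀ x, (Δ x).Countable) (hΔ : ∀ x₁ x₂ : X, x₁ ∈ Δ x₂ ∨ x₂ ∈ Δ x₁) : #X ≤ ℵ₁ := by
  by_contra! hlt
  obtain ⟨A, hA⟩ := le_mk_iff_exists_set.1 hlt.le
  have hU : #(⋃ a ∈ A, Δ a) < #X := calc
    #(⋃ a ∈ A, Δ a) ≤ #A * ℵ₀ := mk_biUnion_le_of_countable hc A
    _ = ℵ₁ := by rw [hA, mul_aleph0_eq aleph0_lt_aleph_one.le]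
    _ < #X := hlt
  obtain ⟨z, hz⟩ : ∃ z, z ∉ ⋃ a ∈ A, Δ a := by
    by_contra! h
    simp [eq_univ_of_forall h, mk_univ] at hU
  have hA_countable : A.Countable := (hc z).mono (subset_of_notMem_biUnion hΔ hz)
  exact aleph0_lt_aleph_one.not_ge (hA ▸ hA_countable.le_aleph0)

theorem stmt_3 {X : Type} (hX : #X = Cardinal.continuum) :
    Cardinal.continuum = Cardinal.aleph 1 ↔
      ∃ Δ : X → Set X, (∀ x, (Δ x).Countable) ∧
        ∀ x₁ x₂ : X, x₁ ∈ Δ x₂ ∨ x₂ ∈ Δ x₁ := by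
  -- the `𝔠` and `ℵ₁` of the statement live in an arbitrary universe, unrelated to that of `X`
  rw [← lift_continuum.{_, 0}, lift_eq_aleph_one, ← hX,
    le_antisymm_iff, and_iff_left (hX ▸ aleph_one_le_continuum)]
  exact ⟨exists_countable_comparable_of_mk_le_aleph_one,
    fun ⟨_, hc, hΔ⟩ => mk_le_aleph_one_of_countable_comparable hc hΔ⟩
end

section
/- Assume the continuum hypothesis. Let X be a set of continuum cardinality and suppose given a family of measurable sets (Λ_x)_{x∈X} in a measurable space (Λ, Σ) together with, for each x, a probability measure μ_x with μ_x(Λ_x) = 1 and μ_x(Λ_y) = 0 for y ≠ x. Then there exists a map m assigning to each x ∈ X a sequence (m_n^x)_{n∈ℕ} in X \ {x} such that the sets Λ_x^m := Λ_x ∩ ∩_{n∈ℕ} (Λ_{m_n^x})ᶜ are Σ-measurable, pairwise disjoint (Λ_x^m ∩ Λ_y^m = ∅ for x ≠ y), and satisfy μ_x(Λ_x^m) = 1. -/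
open MeasureTheory Cardinal

/-! Under CH, `X` carries a well-order of type `ω₁`, so every point has countably many
predecessors and of two distinct points one is a predecessor of the other (Sierpiński).
Removing from `Λ_x` the sets `Λ_y` of all predecessors `y` of `x` costs only a countable union of
`μ_x`-null sets, and for `x ≠ y` one of the two carved sets has had the other's `Λ` removed. -/

theorem Cardinal.exists_countable_predecessors_of_mk_le_aleph_one {X : Type*}
    (hX : #X ≤ ℵ₁) :
    ∃ Δ : X → Set X, (∀ x, (Δ x).Countable) ∧ (∀ x, x ∉ Δ x) ∧
      ∀ x y, x ≠ y → x ∈ Δ y ∨ y ∈ Δ x := by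
  obtain ⟨f⟩ : Nonempty (X ↪ (ℵ₁ : Cardinal).ord.ToType) := by
    rw [← le_def, mk_toType, card_ord]; exact hX
  refine ⟨fun x ↦ f ⁻¹' Set.Iio (f x), fun x ↦ ?_, fun x ↦ lt_irrefl (f x), fun x y hxy ↦ ?_⟩
  · refine Set.Countable.preimage ?_ f.injective
    rw [← le_aleph0_iff_set_countable, ← lt_aleph_one_iff]
    simpa using mk_Iio_lt (f x)
  · exact lt_or_gt_of_ne (f.injective.ne hxy)

theorem Set.Countable.exists_seq_ne_of_notMem {X : Type*} [Nontrivial X] {S : Set X}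
    (hS : S.Countable) {x : X} (hx : x ∉ S) :
    ∃ u : ℕ → X, (∀ n, u n ≠ x) ∧ S ⊆ Set.range u := by
  obtain ⟨y, hy⟩ := exists_ne x
  obtain ⟨u, hu⟩ := (hS.union (Set.countable_singleton y)).exists_eq_range ⟨y, Or.inr rfl⟩
  refine ⟨u, fun n hn ↦ ?_, hu ▸ Set.subset_union_left⟩
  have : u n ∈ S ∪ {y} := hu ▸ Set.mem_range_self n
  rcases this with h | rfl
  · exact hx (hn ▸ h)
  · exact hy hn

theorem MeasureTheory.measure_inter_iInter_compl_of_null {Ω ι : Type*} [MeasurableSpace Ω]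
    [Countable ι] {μ : Measure Ω} (s : Set Ω) {t : ι → Set Ω} (ht : ∀ i, μ (t i) = 0) :
    μ (s ∩ ⋂ i, (t i)ᶜ) = μ s := by
  rw [← Set.compl_iUnion]
  exact measure_inter_conull (by rwa [compl_compl, measure_iUnion_null_iff])

theorem Set.inter_iInter_compl_disjoint_of_mem_range {α X ι : Type*} (L : X → Set α)
    {u : ι → X} {y : X} (hy : y ∈ Set.range u) (s : Set α) :
    Disjoint (s ∩ ⋂ i, (L (u i))ᶜ) (L y) := by
  obtain ⟨i, rfl⟩ := hy
  exact Set.disjoint_left.2 fun _ hz ↦ Set.mem_iInter.1 hz.2 i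

theorem stmt_18_general (CH : Cardinal.continuum = Cardinal.aleph 1)
    {X : Type} (hX : #X = Cardinal.continuum)
    {Λ : Type*} [MeasurableSpace Λ]
    (L : X → Set Λ) (hmeas : ∀ x, MeasurableSet (L x))
    (μ : X → Measure Λ)
    (hfull : ∀ x, μ x (L x) = 1)
    (hzero : ∀ x y, y ≠ x → μ x (L y) = 0) :
    ∃ m : X → ℕ → X,
      (∀ x n, m x n ≠ x) ∧
      (∀ x, MeasurableSet (L x ∩ ⋂ n : ℕ, (L (m x n))ᶜ)) ∧
      (∀ x y, x ≠ y →
        (L x ∩ ⋂ n : ℕ, (L (m x n))ᶜ) ∩ (L y ∩ ⋂ n : ℕ, (L (m y n))ᶜ) = ∅) ∧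
      (∀ x, μ x (L x ∩ ⋂ n : ℕ, (L (m x n))ᶜ) = 1) := by
  have hX₁ : #X = ℵ₁ := by
    rw [hX]; apply lift_injective.{_, 0}; simpa using CH
  have : Nontrivial X := by
    rw [← one_lt_iff_nontrivial, hX₁]; exact one_lt_aleph0.trans aleph0_lt_aleph_one
  obtain ⟨Δ, hΔ, hΔx, hΔ_total⟩ := exists_countable_predecessors_of_mk_le_aleph_one hX₁.le
  choose m hm_ne hm_range using fun x ↦ (hΔ x).exists_seq_ne_of_notMem (hΔx x)
  refine ⟨m, hm_ne, fun x ↦ (hmeas x).inter (.iInter fun n ↦ (hmeas _).compl),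
    fun x y hxy ↦ ?_, fun x ↦ ?_⟩
  · rw [← Set.disjoint_iff_inter_eq_empty]
    rcases hΔ_total x y hxy with h | h
    · exact (Set.inter_iInter_compl_disjoint_of_mem_range L (hm_range y h) _).symm.mono_left
        Set.inter_subset_left
    · exact (Set.inter_iInter_compl_disjoint_of_mem_range L (hm_range x h) _).mono_right
        Set.inter_subset_left
  · rw [measure_inter_iInter_compl_of_null _ fun n ↦ hzero x _ (hm_ne x n), hfull]

theorem stmt_18 (CH : Cardinal.continuum = Cardinal.aleph 1)
    {X : Type} (hX : #X = Cardinal.continuum)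
    {Λ : Type*} [MeasurableSpace Λ]
    (L : X → Set Λ) (hmeas : ∀ x, MeasurableSet (L x))
    (μ : X → Measure Λ) (hprob : ∀ x, IsProbabilityMeasure (μ x))
    (hfull : ∀ x, μ x (L x) = 1)
    (hzero : ∀ x y, y ≠ x → μ x (L y) = 0) :
    ∃ m : X → ℕ → X,
      (∀ x n, m x n ≠ x) ∧
      (∀ x, MeasurableSet (L x ∩ ⋂ n : ℕ, (L (m x n))ᶜ)) ∧
      (∀ x y, x ≠ y →
        (L x ∩ ⋂ n : ℕ, (L (m x n))ᶜ) ∩ (L y ∩ ⋂ n : ℕ, (L (m y n))ᶜ) = ∅) ∧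
      (∀ x, μ x (L x ∩ ⋂ n : ℕ, (L (m x n))ᶜ) = 1) :=
  stmt_18_general CH hX L hmeas μ hfull hzero
end
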